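/- arXiv:1611.01920 — 2 statements merged into one kernel-verified Lean document; each statement's English description precedes it below -/
import Mathlib

section
/- For every integer k ≥ 2, L_k is a free abelian group of rank (k−1)!, and a ℤ-basis is given by the (k−1)! left-normed brackets [[⋯[[1, a_2], a_3], ⋯, a_{k−1}], a_k] as (a_2, a_3, …, a_k) ranges over all orderings of {2, 3, …, k}. Moreover, these elements span a direct summand of C_{k−1}^{(k)}. -/
noncomputable section

/-- The free associative `R`-algebra on noncommuting generators labelled by `Fin k`,
realized as the monoid algebra on the free monoid. -/
abbrev FA (R : Type) [CommRing R] (k : ℕ) : Type := MonoidAlgebra R (FreeMonoid (Fin k))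

/-- A word in the letters `Fin k`, as an element of the free associative algebra. -/
def wordElem (R : Type) [CommRing R] (k : ℕ) (w : List (Fin k)) : FA R k :=
  MonoidAlgebra.single (FreeMonoid.ofList w) 1

/-- `C_{n-1}^{(k)}`: the free `R`-submodule spanned by the injective words of length `n`. -/
def wordsLen (R : Type) [CommRing R] (k n : ℕ) : Submodule R (FA R k) :=
  Submodule.span R {x | ∃ w : List (Fin k), w.Nodup ∧ w.length = n ∧ x = wordElem R k w}

/-- Alternating sum of letter deletions of a single word. -/
def Dword (R : Type) [CommRing R] (k : ℕ) (w : List (Fin k)) : FA R k :=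
  ∑ j : Fin w.length, ((-1 : R) ^ (j : ℕ)) • wordElem R k (w.eraseIdx (j : ℕ))

/-- The differential `D`, extended linearly to the whole free algebra. -/
def Ddiff (R : Type) [CommRing R] (k : ℕ) : FA R k →ₗ[R] FA R k :=
  (Finsupp.lsum R fun w : FreeMonoid (Fin k) =>
    LinearMap.toSpanSingleton R (FA R k) (Dword R k (FreeMonoid.toList w))) ∘ₗ
    (MonoidAlgebra.coeffLinearEquiv R : FA R k ≃ₗ[R] (FreeMonoid (Fin k) →₀ R)).toLinearMap

/-- `IsLie R k S x`: `x` is an iterated graded Lie bracket of the letters of `S`, every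
letter of `S` appearing exactly once.  Here `[p, q] = pq - (-1)^(|p||q|) qp`. -/
inductive IsLie (R : Type) [CommRing R] (k : ℕ) : Finset (Fin k) → FA R k → Prop
  | letter (a : Fin k) : IsLie R k {a} (wordElem R k [a])
  | bracket {S T : Finset (Fin k)} {p q : FA R k} (hST : Disjoint S T)
      (hp : IsLie R k S p) (hq : IsLie R k T q) :
      IsLie R k (S ∪ T) (p * q - ((-1 : R) ^ (S.card * T.card)) • (q * p))

/-- An `L`-product: a product `P₁ ⋯ P_m` over a set partition `[k] = S₁ ⊔ ⋯ ⊔ S_m`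
with each `P i` in the submodule `L_{S i}` (so every block has at least two elements). -/
def IsLProduct (R : Type) [CommRing R] (k : ℕ) (x : FA R k) : Prop :=
  ∃ (m : ℕ) (S : Fin m → Finset (Fin k)) (P : Fin m → FA R k),
    (∀ i, 2 ≤ (S i).card) ∧
    (∀ i, P i ∈ Submodule.span R {y : FA R k | IsLie R k (S i) y}) ∧
    (∀ i j, i ≠ j → Disjoint (S i) (S j)) ∧
    Finset.univ.biUnion S = (Finset.univ : Finset (Fin k)) ∧
    x = (List.ofFn P).prod

/-- Auxiliary recursion for left-normed brackets: `lbrkAux R k x n l` brackets `x`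
(of degree `n`) successively with the letters of `l`. -/
def lbrkAux (R : Type) [CommRing R] (k : ℕ) : FA R k → ℕ → List (Fin k) → FA R k
  | x, _, [] => x
  | x, n, a :: rest =>
      lbrkAux R k (x * wordElem R k [a] - ((-1 : R) ^ n) • (wordElem R k [a] * x)) (n + 1) rest

/-- The left-normed iterated bracket `[[⋯[[a₁,a₂],a₃],⋯],a_m]` of a list of letters. -/
def leftBracket (R : Type) [CommRing R] (k : ℕ) : List (Fin k) → FA R k
  | [] => 0
  | a :: rest => lbrkAux R k (wordElem R k [a]) 1 rest

/-- Index type for the Reutenauer basis of `L_S`: lists enumerating `S` exactly once and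
starting with the smallest element of `S`. -/
def ReutIdx (k : ℕ) (S : Finset (Fin k)) : Type :=
  {l : List (Fin k) // l.Nodup ∧ l.toFinset = S ∧ ∃ s t, l = s :: t ∧ ∀ a ∈ S, s ≤ a}

/-!
By the graded Jacobi identity, bracketing a left-normed bracket `[l]` with a Lie element on a
set `T` disjoint from `l` gives a combination of left-normed brackets `[l ++ t]`, `t` enumerating
`T`; induction on the bracket structure then puts every Lie element on `S` into the span of the
brackets `[s :: t]`, for any `s ∈ S`. These brackets are unitriangular: among the words beginning
with `s`, the only one occurring in `[s :: t]` is `s :: t`, with coefficient `1`. So reading off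
the coefficients of the words `s :: t` is a left inverse of the family, which makes it
independent and makes the kernel of that coefficient map a complement of its span.
-/

open Submodule

section LeftInverse

variable {R M ι : Type*} [Ring R] [AddCommGroup M] [Module R M] {B : ι → M}
  {π : M →ₗ[R] ι →₀ R}

theorem comp_linearCombination_eq_id_of_apply_eq_single
    (h : ∀ i, π (B i) = Finsupp.single i 1) :
    π ∘ₗ Finsupp.linearCombination R B = LinearMap.id :=
  Finsupp.lhom_ext fun i c => by simp [h]

theorem linearIndependent_of_apply_eq_single (h : ∀ i, π (B i) = Finsupp.single i 1) :
    LinearIndependent R B :=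
  Function.LeftInverse.injective (g := π)
    (LinearMap.congr_fun (comp_linearCombination_eq_id_of_apply_eq_single h))

theorem isCompl_span_ker_of_apply_eq_single (h : ∀ i, π (B i) = Finsupp.single i 1) :
    IsCompl (span R (Set.range B)) (LinearMap.ker π) := by
  have hπ := LinearMap.congr_fun (comp_linearCombination_eq_id_of_apply_eq_single h)
  simp only [LinearMap.comp_apply, LinearMap.id_apply] at hπ
  rw [← Finsupp.range_linearCombination]
  constructor
  · rw [disjoint_iff_inf_le]
    rintro _ ⟨⟨c, rfl⟩, hc⟩
    have hc₀ : c = 0 := (hπ c).symm.trans hc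
    simp [hc₀]
  · rw [codisjoint_iff_le_sup]
    intro x _
    refine mem_sup.mpr
      ⟨_, ⟨π x, rfl⟩, x - Finsupp.linearCombination R B (π x), ?_, by abel⟩
    rw [LinearMap.mem_ker, map_sub, hπ, sub_self]

end LeftInverse

variable {R : Type} [CommRing R] {k : ℕ}

theorem wordElem_mul (u v : List (Fin k)) :
    wordElem R k u * wordElem R k v = wordElem R k (u ++ v) := by
  simp [wordElem, MonoidAlgebra.single_mul_single, FreeMonoid.ofList_append]

variable (R) in
def spanWords (P : List (Fin k) → Prop) : Submodule R (FA R k) :=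
  span R {x | ∃ w, P w ∧ x = wordElem R k w}

theorem mem_spanWords_iff {P : List (Fin k) → Prop} {x : FA R k} :
    x ∈ spanWords R P ↔ ∀ u ∈ x.coeff.support, P (FreeMonoid.toList u) := by
  have : {x : FA R k | ∃ w, P w ∧ x = wordElem R k w} =
      (fun u => MonoidAlgebra.single u 1) '' {u : FreeMonoid (Fin k) | P u.toList} := by
    ext y
    constructor
    · rintro ⟨w, hw, rfl⟩
      exact ⟨FreeMonoid.ofList w, by simpa using hw, rfl⟩
    · rintro ⟨u, hu, rfl⟩
      exact ⟨u.toList, hu, by simp [wordElem]⟩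
  rw [spanWords, this, ← MonoidAlgebra.supported_eq_span_single, MonoidAlgebra.mem_supported]
  rfl

theorem wordElem_mem_spanWords {P : List (Fin k) → Prop} {w : List (Fin k)} (h : P w) :
    wordElem R k w ∈ spanWords R P :=
  subset_span ⟨w, h, rfl⟩

theorem spanWords_mono {P Q : List (Fin k) → Prop} (h : ∀ w, P w → Q w) :
    spanWords R P ≤ spanWords R Q :=
  span_mono fun _ ⟨w, hw, hx⟩ => ⟨w, h w hw, hx⟩

theorem spanWords_true : spanWords R (fun _ : List (Fin k) => True) = ⊤ :=
  eq_top_iff.mpr fun _ _ => mem_spanWords_iff.mpr fun _ _ => trivial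

theorem mul_mem_spanWords {P Q : List (Fin k) → Prop} {p q : FA R k}
    (hp : p ∈ spanWords R P) (hq : q ∈ spanWords R Q) :
    p * q ∈ spanWords R (fun w => ∃ u v, P u ∧ Q v ∧ w = u ++ v) := by
  have hpq := mul_mem_mul hp hq
  rw [spanWords, spanWords, span_mul_span] at hpq
  refine span_mono ?_ hpq
  rintro _ ⟨_, ⟨u, hu, rfl⟩, _, ⟨v, hv, rfl⟩, rfl⟩
  exact ⟨u ++ v, ⟨u, v, hu, hv, rfl⟩, wordElem_mul u v⟩

def Enumerates (S : Finset (Fin k)) (w : List (Fin k)) : Prop :=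
  w.Nodup ∧ w.toFinset = S

theorem Enumerates.append {S T : Finset (Fin k)} {u v : List (Fin k)} (hST : Disjoint S T)
    (hu : Enumerates S u) (hv : Enumerates T v) : Enumerates (S ∪ T) (u ++ v) := by
  refine ⟨hu.1.append hv.1 ?_, by rw [List.toFinset_append, hu.2, hv.2]⟩
  rw [← List.disjoint_toFinset_iff_disjoint, hu.2, hv.2]
  exact hST

theorem Enumerates.length_eq {S : Finset (Fin k)} {w : List (Fin k)} (h : Enumerates S w) :
    w.length = S.card := by
  rw [← h.2, List.toFinset_card_of_nodup h.1]

theorem IsLie.mem_spanWords {S : Finset (Fin k)} {x : FA R k} (h : IsLie R k S x) :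
    x ∈ spanWords R (Enumerates S) := by
  induction h with
  | letter a => exact wordElem_mem_spanWords ⟨List.nodup_singleton a, by simp⟩
  | bracket hST _ _ ihp ihq =>
    refine sub_mem ?_ (smul_mem _ _ ?_)
    · refine spanWords_mono ?_ (mul_mem_spanWords ihp ihq)
      rintro _ ⟨u, v, hu, hv, rfl⟩
      exact hu.append hST hv
    · refine spanWords_mono ?_ (mul_mem_spanWords ihq ihp)
      rintro _ ⟨u, v, hu, hv, rfl⟩
      rw [Finset.union_comm]
      exact hu.append hST.symm hv

def gradedBracket (p : FA R k) (m : ℕ) (q : FA R k) (n : ℕ) : FA R k :=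
  p * q - ((-1 : R) ^ (m * n)) • (q * p)

theorem gradedBracket_mem_span {s t : Set (FA R k)} {p q : FA R k} {m n : ℕ}
    (hp : p ∈ span R s) (h : ∀ x ∈ s, gradedBracket x m q n ∈ span R t) :
    gradedBracket p m q n ∈ span R t := by
  let f : FA R k →ₗ[R] FA R k :=
    LinearMap.mulRight R q - ((-1 : R) ^ (m * n)) • LinearMap.mulLeft R q
  have hf : ∀ x, gradedBracket x m q n = f x := fun _ => rfl
  rw [hf]
  refine span_le.mpr ?_ (apply_mem_span_image_of_mem_span f hp)
  rintro _ ⟨x, hx, rfl⟩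
  exact hf x ▸ h x hx

theorem gradedBracket_swap (p q : FA R k) (m n : ℕ) :
    gradedBracket p m q n = -(((-1 : R) ^ (m * n)) • gradedBracket q n p m) := by
  unfold gradedBracket
  rw [Nat.mul_comm n m]
  rcases Nat.even_or_odd (m * n) with h | h <;> simp [h.neg_one_pow]

theorem gradedBracket_jacobi (p q₁ q₂ : FA R k) (m a b : ℕ) :
    gradedBracket p m (gradedBracket q₁ a q₂ b) (a + b) =
      gradedBracket (gradedBracket p m q₁ a) (m + a) q₂ b -
        ((-1 : R) ^ (a * b)) • gradedBracket (gradedBracket p m q₂ b) (m + b) q₁ a := by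
  unfold gradedBracket
  rw [Nat.mul_add, Nat.add_mul, Nat.add_mul, Nat.mul_comm b a, pow_add, pow_add, pow_add]
  rcases Nat.even_or_odd (m * a) with h₁ | h₁ <;>
    rcases Nat.even_or_odd (m * b) with h₂ | h₂ <;>
      rcases Nat.even_or_odd (a * b) with h₃ | h₃ <;>
        simp only [h₁.neg_one_pow, h₂.neg_one_pow, h₃.neg_one_pow, mul_one, mul_neg, neg_neg,
          one_smul, neg_smul] <;>
        noncomm_ring

theorem lbrkAux_append_singleton (r : List (Fin k)) (x : FA R k) (n : ℕ) (a : Fin k) :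
    lbrkAux R k x n (r ++ [a]) =
      gradedBracket (lbrkAux R k x n r) (n + r.length) (wordElem R k [a]) 1 := by
  induction r generalizing x n with
  | nil => simp [lbrkAux, gradedBracket]
  | cons b t ih =>
    rw [List.cons_append, lbrkAux, lbrkAux, ih, List.length_cons, Nat.add_right_comm,
      Nat.add_assoc]

theorem leftBracket_append_singleton {l : List (Fin k)} (hl : l ≠ []) (a : Fin k) :
    leftBracket R k (l ++ [a]) =
      gradedBracket (leftBracket R k l) l.length (wordElem R k [a]) 1 := by
  obtain ⟨b, t, rfl⟩ := List.exists_cons_of_ne_nil hl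
  rw [List.cons_append, leftBracket, leftBracket, lbrkAux_append_singleton, List.length_cons,
    Nat.add_comm]

theorem leftBracket_singleton (a : Fin k) : leftBracket R k [a] = wordElem R k [a] := rfl

theorem isLie_leftBracket {l : List (Fin k)} (hl : l ≠ []) (hnd : l.Nodup) :
    IsLie R k l.toFinset (leftBracket R k l) := by
  induction l using List.reverseRecOn with
  | nil => exact absurd rfl hl
  | append_singleton l a ih =>
    rcases eq_or_ne l [] with rfl | hl'
    · exact IsLie.letter a
    have hdisj : Disjoint l.toFinset {a} := Finset.disjoint_singleton_right.mpr fun ha =>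
      (List.nodup_append.mp hnd).2.2 a (List.mem_toFinset.mp ha) a (List.mem_singleton_self a) rfl
    have h := IsLie.bracket hdisj (ih hl' (List.nodup_append.mp hnd).1) (IsLie.letter a)
    rw [List.toFinset_card_of_nodup (List.nodup_append.mp hnd).1, Finset.card_singleton,
      mul_one] at h
    rw [leftBracket_append_singleton hl', List.toFinset_append]
    simpa [gradedBracket] using h

variable (R) in
def bracketsExtending (l : List (Fin k)) (T : Finset (Fin k)) : Submodule R (FA R k) :=
  span R {x | ∃ t, Enumerates T t ∧ x = leftBracket R k (l ++ t)}

def ExtendsBrackets (T : Finset (Fin k)) (q : FA R k) : Prop :=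
  ∀ l : List (Fin k), l ≠ [] → l.Nodup → Disjoint l.toFinset T →
    gradedBracket (leftBracket R k l) l.length q T.card ∈ bracketsExtending R l T

theorem gradedBracket_mem_bracketsExtending {l : List (Fin k)} {Ta Tb : Finset (Fin k)}
    {x q : FA R k} (hq : ExtendsBrackets Tb q) (hx : x ∈ bracketsExtending R l Ta)
    (hl : l ≠ []) (hnd : l.Nodup) (ha : Disjoint l.toFinset Ta) (hb : Disjoint l.toFinset Tb)
    (hab : Disjoint Ta Tb) :
    gradedBracket x (l.length + Ta.card) q Tb.card ∈ bracketsExtending R l (Ta ∪ Tb) := by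
  refine gradedBracket_mem_span hx ?_
  rintro _ ⟨t, ht, rfl⟩
  have hlt : Enumerates (l.toFinset ∪ Ta) (l ++ t) := Enumerates.append ha ⟨hnd, rfl⟩ ht
  have hlt_b : Disjoint (l ++ t).toFinset Tb := by
    rw [hlt.2]
    exact Finset.disjoint_union_left.mpr ⟨hb, hab⟩
  have h := hq (l ++ t) (by simp [hl]) hlt.1 hlt_b
  rw [List.length_append, ht.length_eq] at h
  refine span_le.mpr ?_ h
  rintro _ ⟨t', ht', rfl⟩
  exact subset_span ⟨t ++ t', ht.append hab ht', by rw [List.append_assoc]⟩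

theorem IsLie.extendsBrackets {T : Finset (Fin k)} {q : FA R k} (h : IsLie R k T q) :
    ExtendsBrackets T q := by
  induction h with
  | letter a =>
    intro l hl _ _
    refine subset_span ⟨[a], ⟨List.nodup_singleton a, by simp⟩, ?_⟩
    rw [leftBracket_append_singleton hl, Finset.card_singleton]
  | @bracket T₁ T₂ q₁ q₂ hST _ _ ih₁ ih₂ =>
    intro l hl hnd hdisj
    rw [Finset.disjoint_union_right] at hdisj
    change gradedBracket _ _ (gradedBracket q₁ T₁.card q₂ T₂.card) _ ∈ _
    rw [Finset.card_union_of_disjoint hST, gradedBracket_jacobi]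
    refine sub_mem (gradedBracket_mem_bracketsExtending ih₂ (ih₁ l hl hnd hdisj.1) hl hnd
      hdisj.1 hdisj.2 hST) (smul_mem _ _ ?_)
    rw [Finset.union_comm]
    exact gradedBracket_mem_bracketsExtending ih₁ (ih₂ l hl hnd hdisj.2) hl hnd hdisj.2 hdisj.1
      hST.symm

theorem gradedBracket_mem_bracketsExtending_singleton {Sa Sb : Finset (Fin k)} {p q : FA R k}
    {s : Fin k} (hab : Disjoint Sa Sb) (hs : s ∈ Sa)
    (hp : p ∈ bracketsExtending R [s] (Sa.erase s)) (hq : IsLie R k Sb q) :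
    gradedBracket p Sa.card q Sb.card ∈ bracketsExtending R [s] ((Sa ∪ Sb).erase s) := by
  have hs' : s ∉ Sb := Finset.disjoint_left.mp hab hs
  have h := gradedBracket_mem_bracketsExtending hq.extendsBrackets hp (List.cons_ne_nil s [])
    (List.nodup_singleton s) (by simp) (by simpa using hs')
    (Finset.disjoint_of_subset_left (Finset.erase_subset _ _) hab)
  have hset : Sa.erase s ∪ Sb = (Sa ∪ Sb).erase s := by
    rw [Finset.erase_union_distrib, Finset.erase_eq_of_notMem hs']
  rwa [List.length_singleton, Nat.add_comm, Finset.card_erase_add_one hs, hset] at h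

theorem IsLie.mem_bracketsExtending_singleton {S : Finset (Fin k)} {x : FA R k}
    (h : IsLie R k S x) {s : Fin k} (hs : s ∈ S) : x ∈ bracketsExtending R [s] (S.erase s) := by
  induction h with
  | letter a =>
    obtain rfl := Finset.mem_singleton.mp hs
    exact subset_span ⟨[], ⟨List.nodup_nil, by simp⟩, rfl⟩
  | @bracket S₁ S₂ p q hST hp hq ihp ihq =>
    change gradedBracket p S₁.card q S₂.card ∈ _
    rcases Finset.mem_union.mp hs with hs₁ | hs₂
    · exact gradedBracket_mem_bracketsExtending_singleton hST hs₁ (ihp hs₁) hq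
    · have h := gradedBracket_mem_bracketsExtending_singleton hST.symm hs₂ (ihq hs₂) hp
      rw [Finset.union_comm] at h
      rw [gradedBracket_swap]
      exact neg_mem (smul_mem _ _ h)

theorem leftBracket_cons_sub_wordElem_mem {s : Fin k} {t : List (Fin k)} (hs : s ∉ t) :
    leftBracket R k (s :: t) - wordElem R k (s :: t) ∈
      spanWords R (fun w => w.head? ≠ some s) := by
  induction t using List.reverseRecOn with
  | nil => simp [leftBracket_singleton (R := R)]
  | append_singleton t a ih =>
    have ha : a ≠ s := fun h => hs (by simp [h])
    have h₁ := mul_mem_spanWords (ih fun h => hs (by simp [h]))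
      (wordElem_mem_spanWords (R := R) (P := (· = [a])) rfl)
    have h₂ := mul_mem_spanWords (wordElem_mem_spanWords (R := R) (P := (· = [a])) rfl)
      (show leftBracket R k (s :: t) ∈ spanWords R fun _ => True by
        rw [spanWords_true]; exact mem_top)
    rw [← List.cons_append, leftBracket_append_singleton (List.cons_ne_nil s t), ← wordElem_mul,
      gradedBracket, sub_right_comm, ← sub_mul]
    refine sub_mem (spanWords_mono ?_ h₁) (smul_mem _ _ (spanWords_mono ?_ h₂))
    · rintro _ ⟨u, _, hu, rfl, rfl⟩
      cases u <;> simp_all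
    · rintro _ ⟨_, v, rfl, -, rfl⟩
      simpa using ha

theorem coeff_leftBracket_cons {s : Fin k} {t t' : List (Fin k)} (hs : s ∉ t) :
    (leftBracket R k (s :: t)).coeff (FreeMonoid.ofList (s :: t')) = if t = t' then 1 else 0 := by
  classical
  have h := mem_spanWords_iff.mp (leftBracket_cons_sub_wordElem_mem (R := R) hs)
    (FreeMonoid.ofList (s :: t'))
  have h₀ : (leftBracket R k (s :: t) - wordElem R k (s :: t)).coeff
      (FreeMonoid.ofList (s :: t')) = 0 := by
    by_contra hne
    exact h (Finsupp.mem_support_iff.mpr hne) (by simp)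
  rw [MonoidAlgebra.coeff_sub, Finsupp.sub_apply, sub_eq_zero] at h₀
  rw [h₀, wordElem, MonoidAlgebra.coeff_single, Finsupp.single_apply]
  simp

theorem enumerates_cons_iff {S : Finset (Fin k)} {s : Fin k} {t : List (Fin k)} (hs : s ∈ S) :
    Enumerates S (s :: t) ↔ Enumerates (S.erase s) t := by
  simp only [Enumerates, List.nodup_cons, List.toFinset_cons]
  constructor
  · rintro ⟨⟨hst, hnd⟩, hS⟩
    rw [← hS, Finset.erase_insert (by simpa using hst)]
    exact ⟨hnd, rfl⟩
  · rintro ⟨hnd, ht⟩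
    refine ⟨⟨fun h => ?_, hnd⟩, by rw [ht, Finset.insert_erase hs]⟩
    simpa [ht] using List.mem_toFinset.mpr h

theorem natCard_enumerates (T : Finset (Fin k)) :
    Nat.card {t : List (Fin k) // Enumerates T t} = T.card.factorial := by
  have e : {t : List (Fin k) // Enumerates T t} ≃
      {t // t ∈ T.toList.permutations.toFinset} := by
    refine Equiv.subtypeEquivRight fun t => ?_
    rw [List.mem_toFinset, List.mem_permutations]
    constructor
    · rintro ⟨hnd, hT⟩
      exact List.perm_of_nodup_nodup_toFinset_eq hnd (Finset.nodup_toList T)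
        (by rw [hT, Finset.toList_toFinset])
    · intro h
      exact ⟨h.nodup_iff.mpr (Finset.nodup_toList T),
        (List.toFinset_eq_of_perm _ _ h).trans (Finset.toList_toFinset T)⟩
  rw [Nat.card_congr e, Nat.card_eq_finsetCard,
    List.toFinset_card_of_nodup (List.nodup_permutations _ (Finset.nodup_toList T)),
    List.length_permutations, Finset.length_toList]

theorem span_isLie_le_spanWords (S : Finset (Fin k)) :
    span R {x : FA R k | IsLie R k S x} ≤ spanWords R (Enumerates S) :=
  span_le.mpr fun _ h => IsLie.mem_spanWords h

variable (R) in
def reutIdxCoeffs (S : Finset (Fin k)) : FA R k →ₗ[R] ReutIdx k S →₀ R :=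
  Finsupp.lcomapDomain (fun i : ReutIdx k S => FreeMonoid.ofList i.1)
      (FreeMonoid.ofList.injective.comp Subtype.val_injective) ∘ₗ
    (MonoidAlgebra.coeffLinearEquiv R).toLinearMap

section ReutIdx

variable {S : Finset (Fin k)} {s : Fin k}

theorem ReutIdx.eq_cons (hs : s ∈ S) (hmin : ∀ a ∈ S, s ≤ a) (i : ReutIdx k S) :
    i.1 = s :: i.1.tail := by
  obtain ⟨-, hS, s', t, h, hle⟩ := i.2
  have hs' : s' ∈ S := hS ▸ List.mem_toFinset.mpr (h ▸ List.mem_cons_self)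
  rw [h, le_antisymm (hle s hs) (hmin s' hs')]
  rfl

def ReutIdx.equivEnumerates (hs : s ∈ S) (hmin : ∀ a ∈ S, s ≤ a) :
    {t : List (Fin k) // Enumerates (S.erase s) t} ≃ ReutIdx k S where
  toFun t := ⟨s :: t.1, (enumerates_cons_iff hs).mpr t.2 |>.1,
    (enumerates_cons_iff hs).mpr t.2 |>.2, s, t.1, rfl, hmin⟩
  invFun i := ⟨i.1.tail, (enumerates_cons_iff hs).mp
    (by rw [← ReutIdx.eq_cons hs hmin i]; exact ⟨i.2.1, i.2.2.1⟩)⟩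
  left_inv _ := rfl
  right_inv i := Subtype.ext (ReutIdx.eq_cons hs hmin i).symm

theorem natCard_reutIdx (hs : s ∈ S) (hmin : ∀ a ∈ S, s ≤ a) :
    Nat.card (ReutIdx k S) = (S.card - 1).factorial := by
  rw [← Nat.card_congr (ReutIdx.equivEnumerates hs hmin), natCard_enumerates,
    Finset.card_erase_of_mem hs]

theorem reutIdxCoeffs_leftBracket (hs : s ∈ S) (hmin : ∀ a ∈ S, s ≤ a) (i : ReutIdx k S) :
    reutIdxCoeffs R S (leftBracket R k i.1) = Finsupp.single i 1 := by
  ext j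
  have hi := ReutIdx.eq_cons hs hmin i
  have hj := ReutIdx.eq_cons hs hmin j
  have hst : s ∉ i.1.tail := (List.nodup_cons.mp (hi ▸ i.2.1)).1
  change (leftBracket R k i.1).coeff (FreeMonoid.ofList j.1) = _
  have htail : i.1.tail = j.1.tail ↔ i = j :=
    ⟨fun h => Subtype.ext (by rw [hi, hj, h]), fun h => h ▸ rfl⟩
  classical
  rw [hi, hj, coeff_leftBracket_cons hst, Finsupp.single_apply]
  simp only [htail]

theorem span_leftBracket_reutIdx (hs : s ∈ S) (hmin : ∀ a ∈ S, s ≤ a) :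
    span R (Set.range fun i : ReutIdx k S => leftBracket R k i.1) =
      span R {x | IsLie R k S x} := by
  apply le_antisymm
  · rw [span_le]
    rintro _ ⟨i, rfl⟩
    apply subset_span
    have hne : i.1 ≠ [] := by
      rw [ReutIdx.eq_cons hs hmin i]
      exact List.cons_ne_nil _ _
    have h := isLie_leftBracket (R := R) hne i.2.1
    rwa [i.2.2.1] at h
  · rw [span_le]
    intro x hx
    refine span_le.mpr ?_ (IsLie.mem_bracketsExtending_singleton hx hs)
    rintro _ ⟨t, ht, rfl⟩
    exact subset_span ⟨ReutIdx.equivEnumerates hs hmin ⟨t, ht⟩, rfl⟩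

end ReutIdx

theorem wordsLen_eq_spanWords_enumerates_univ :
    wordsLen R k k = spanWords R (Enumerates (Finset.univ : Finset (Fin k))) := by
  have hlen : ∀ w : List (Fin k), w.Nodup → (w.length = k ↔ w.toFinset = Finset.univ) :=
    fun w hw => by
      rw [← Finset.card_eq_iff_eq_univ, List.toFinset_card_of_nodup hw, Fintype.card_fin]
  refine congrArg (span R) (Set.ext fun x => ⟨?_, ?_⟩)
  · rintro ⟨w, hnd, hw, rfl⟩
    exact ⟨w, ⟨hnd, (hlen w hnd).mp hw⟩, rfl⟩
  · rintro ⟨w, ⟨hnd, hw⟩, rfl⟩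
    exact ⟨w, hnd, (hlen w hnd).mpr hw, rfl⟩

/-- `L_k` is free abelian of rank `(k-1)!`, with basis the left-normed brackets
`[[⋯[[1,a₂],a₃],⋯],a_k]` over orderings `(a₂,…,a_k)` of `{2,…,k}`; moreover these
span a direct summand of `C_{k-1}^{(k)}`. -/
theorem Lk_free_with_reutenauer_basis (k : ℕ) (hk : 2 ≤ k) :
    ∃ b : Module.Basis (ReutIdx k Finset.univ) ℤ
        ↥(Submodule.span ℤ {x : FA ℤ k | IsLie ℤ k Finset.univ x}),
      (∀ l : ReutIdx k Finset.univ, (b l).val = leftBracket ℤ k l.val) ∧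
      Nat.card (ReutIdx k Finset.univ) = (k - 1).factorial ∧
      ∃ N : Submodule ℤ (FA ℤ k), N ≤ wordsLen ℤ k k ∧
        Submodule.span ℤ {x : FA ℤ k | IsLie ℤ k Finset.univ x} ⊓ N = ⊥ ∧
        Submodule.span ℤ {x : FA ℤ k | IsLie ℤ k Finset.univ x} ⊔ N = wordsLen ℤ k k := by
  set z : Fin k := ⟨0, by omega⟩
  have hmin : ∀ a ∈ Finset.univ, z ≤ a := fun a _ => Nat.zero_le a
  have hB := reutIdxCoeffs_leftBracket (R := ℤ) (Finset.mem_univ z) hmin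
  have hspan := span_leftBracket_reutIdx (R := ℤ) (Finset.mem_univ z) hmin
  have hcompl := isCompl_span_ker_of_apply_eq_single hB
  rw [hspan] at hcompl
  have hle := span_isLie_le_spanWords (R := ℤ) (Finset.univ : Finset (Fin k))
  rw [← wordsLen_eq_spanWords_enumerates_univ] at hle
  refine ⟨(Module.Basis.span (linearIndependent_of_apply_eq_single hB)).map
      (LinearEquiv.ofEq _ _ hspan), fun l => by simp [Module.Basis.span_apply], ?_,
    LinearMap.ker (reutIdxCoeffs ℤ Finset.univ) ⊓ wordsLen ℤ k k, inf_le_right,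
    (hcompl.disjoint.mono_right inf_le_left).eq_bot, ?_⟩
  · rw [natCard_reutIdx (Finset.mem_univ z) hmin, Finset.card_univ, Fintype.card_fin]
  · rw [← sup_inf_assoc_of_le _ hle, hcompl.sup_eq_top, top_inf_eq]
end
end

section
/- For every finite set S, the chain complexes Inj_*(S) and Inj⁺_*(S) are isomorphic as chain complexes of abelian groups; that is, there are ℤ-module isomorphisms Inj_p(S) ≅ Inj⁺_p(S) for all p that commute with the differentials. (The isomorphism need not be equivariant for the action of permutations of S.) -/
noncomputable section

/-- Injective words of length `n` in the alphabet `α`. -/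
abbrev InjWord (α : Type) (n : ℕ) : Type := {l : List α // l.Nodup ∧ l.length = n}

/-- The free ℤ-module on injective words of length `n`; this is the degree-`(n-1)` term
of (either version of) the complex of injective words. -/
abbrev InjMod (α : Type) (n : ℕ) : Type := InjWord α n →₀ ℤ

/-- Deleting the `j`-th letter of an injective word. -/
def eraseWord (α : Type) (n : ℕ) (w : InjWord α (n + 1)) (j : Fin (n + 1)) : InjWord α n :=
  ⟨w.val.eraseIdx (j : ℕ), by
    refine ⟨w.prop.1.sublist (List.eraseIdx_sublist _ _), ?_⟩
    have hj : (j : ℕ) < w.val.length := by rw [w.prop.2]; exact j.isLt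
    simp [List.length_eraseIdx, hj, w.prop.2]
    have := j.isLt
    omega⟩

/-- The differential of the (classical) complex of injective words: the alternating sum
of the letter-deletion maps. -/
def injD (α : Type) (n : ℕ) : InjMod α (n + 1) →ₗ[ℤ] InjMod α n :=
  Finsupp.lsum ℤ fun w => LinearMap.toSpanSingleton ℤ (InjMod α n)
    (∑ j : Fin (n + 1), ((-1 : ℤ) ^ (j : ℕ)) • Finsupp.single (eraseWord α n w j) 1)

/-- The sign `(-1)^{#{c ∈ C | c < a}}` arising from wedging `a` onto the (increasingly
sorted) orientation of `C`. -/
def insSign (α : Type) [LinearOrder α] (C : Finset α) (a : α) : ℤ :=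
  (-1) ^ (C.filter fun c => c < a).card

/-- The differential of the oriented complex of injective words `Inj⁺`, in the model
where the basis symbol attached to an injective word `u` is `u ⊗ (increasingly sorted
orientation of the complement of `u`)`: the non-alternating sum `Σ dᵢ⁺`,
`dᵢ⁺(u ⊗ ω) = (u minus its i-th letter) ⊗ (uᵢ ∧ ω)`. -/
def injPD (α : Type) [Fintype α] [LinearOrder α] (n : ℕ) :
    InjMod α (n + 1) →ₗ[ℤ] InjMod α n :=
  Finsupp.lsum ℤ fun w => LinearMap.toSpanSingleton ℤ (InjMod α n)
    (∑ j : Fin (n + 1),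
      insSign α (w.val.toFinset)ᶜ (w.val.get (Fin.cast w.prop.2.symm j)) •
        Finsupp.single (eraseWord α n w j) 1)

/-! The isomorphism is diagonal in the basis of injective words, `u ↦ ε(u) • u` with
`ε(u) = ±1`. Choosing `ε(a :: t) = insSign (a :: t)ᶜ a * ε(t)`, so that twisting by `ε`
matches `d₀` with `d₀⁺`, induction on the word gives
`(-1)^j * ε(u without uⱼ) = ε(u) * insSign uᶜ uⱼ`, which turns the alternating differential
into the oriented one term by term. -/

theorem List.Nodup.toFinset_eraseIdx {α : Type} [DecidableEq α] {l : List α} (hl : l.Nodup)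
    {i : ℕ} (hi : i < l.length) : (l.eraseIdx i).toFinset = l.toFinset.erase l[i] := by
  ext a
  simp [← hl.erase_getElem i hi, hl.mem_erase_iff]

section

variable {α : Type} [LinearOrder α]

theorem insSign_mul_self (C : Finset α) (a : α) : insSign α C a * insSign α C a = 1 := by
  simp [insSign, ← mul_pow]

theorem insSign_insert {C : Finset α} {c : α} (hc : c ∉ C) (a : α) :
    insSign α (insert c C) a = (if c < a then -1 else 1) * insSign α C a := by
  unfold insSign
  rw [Finset.filter_insert]
  split_ifs with h
  · rw [Finset.card_insert_of_notMem fun h' => hc (Finset.mem_filter.mp h').1, pow_succ']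
  · rw [one_mul]

end

section

variable {α : Type} [Fintype α] [LinearOrder α]

def wordSign : List α → ℤ
  | [] => 1
  | a :: t => insSign α (a :: t).toFinsetᶜ a * wordSign t

theorem wordSign_mul_self : ∀ l : List α, wordSign l * wordSign l = 1
  | [] => by simp [wordSign]
  | a :: t => by
    rw [wordSign, mul_mul_mul_comm, insSign_mul_self, wordSign_mul_self t, one_mul]

theorem neg_one_pow_mul_wordSign_eraseIdx :
    ∀ (l : List α), l.Nodup → ∀ (j : ℕ) (hj : j < l.length),
      (-1) ^ j * wordSign (l.eraseIdx j) = wordSign l * insSign α l.toFinsetᶜ l[j]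
  | [], _, _, hj => absurd hj (Nat.not_lt_zero _)
  | a :: t, _, 0, _ => by
    rw [List.eraseIdx_cons_zero, List.getElem_cons_zero, pow_zero, one_mul, wordSign,
      mul_right_comm, insSign_mul_self, one_mul]
  | a :: t, hl, j + 1, hj => by
    obtain ⟨hat, ht⟩ := List.nodup_cons.mp hl
    have hj' : j < t.length := Nat.lt_of_succ_lt_succ hj
    have hxa : t[j] ≠ a := fun h => hat (h ▸ List.getElem_mem hj')
    have hcompl : (a :: t.eraseIdx j).toFinsetᶜ = insert t[j] (a :: t).toFinsetᶜ := by
      simp only [List.toFinset_cons]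
      rw [ht.toFinset_eraseIdx hj', ← Finset.erase_insert_of_ne hxa.symm, Finset.compl_erase]
    have htcompl : t.toFinsetᶜ = insert a (a :: t).toFinsetᶜ := by
      rw [List.toFinset_cons, Finset.compl_insert, Finset.insert_erase (by simpa using hat)]
    have ih := neg_one_pow_mul_wordSign_eraseIdx t ht j hj'
    rw [htcompl, insSign_insert (by simp)] at ih
    simp only [List.eraseIdx_cons_succ, List.getElem_cons_succ, wordSign, hcompl, pow_succ]
    rw [insSign_insert (by simp)]
    rcases hxa.lt_or_gt with h | h
    · simp only [if_pos h, if_neg h.asymm] at ih ⊢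
      linear_combination (insSign α (a :: t).toFinsetᶜ a) * ih
    · simp only [if_pos h, if_neg h.asymm] at ih ⊢
      linear_combination (-insSign α (a :: t).toFinsetᶜ a) * ih

def signChange (n : ℕ) : InjMod α n →ₗ[ℤ] InjMod α n :=
  Finsupp.lsum ℤ fun w => wordSign w.val • Finsupp.lsingle w

theorem signChange_single {n : ℕ} (w : InjWord α n) (c : ℤ) :
    signChange n (Finsupp.single w c) = Finsupp.single w (wordSign w.val * c) := by
  simp [signChange, Finsupp.smul_single]

theorem signChange_involutive (n : ℕ) : Function.Involutive (signChange (α := α) n) := by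
  intro f
  induction f using Finsupp.induction_linear with
  | zero => simp
  | add f g hf hg => rw [map_add, map_add, hf, hg]
  | single w c =>
    rw [signChange_single, signChange_single, ← mul_assoc, wordSign_mul_self, one_mul]

theorem signChange_comp_injD (n : ℕ) :
    signChange n ∘ₗ injD α n = injPD α n ∘ₗ signChange (n + 1) := by
  refine Finsupp.lhom_ext fun w c => ?_
  simp only [LinearMap.comp_apply, signChange_single, injD, injPD, Finsupp.lsum_single,
    LinearMap.toSpanSingleton_apply, map_smul, map_sum, Finset.smul_sum]
  refine Finset.sum_congr rfl fun j _ => ?_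
  have key : (-1) ^ (j : ℕ) * wordSign (eraseWord α n w j).val =
      wordSign w.val * insSign α w.val.toFinsetᶜ (w.val.get (Fin.cast w.prop.2.symm j)) :=
    neg_one_pow_mul_wordSign_eraseIdx w.val w.prop.1 j (w.prop.2.symm ▸ j.isLt)
  simp only [Finsupp.smul_single, smul_eq_mul, mul_one]
  congr 1
  linear_combination c * key

end

/-- The complex of injective words and the oriented complex of injective words are
isomorphic as chain complexes of abelian groups (not necessarily equivariantly). -/
theorem inj_iso_injPlus (α : Type) [Fintype α] [LinearOrder α] :
    ∃ e : ∀ n : ℕ, InjMod α n ≃ₗ[ℤ] InjMod α n,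
      ∀ n : ℕ, (e n).toLinearMap ∘ₗ injD α n = injPD α n ∘ₗ (e (n + 1)).toLinearMap :=
  ⟨fun n => LinearEquiv.ofInvolutive (signChange n) (signChange_involutive n),
    signChange_comp_injD⟩
end
end
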